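/- Suppose e^{2ε} ≥ p_max/p_min or p_max = 1/(2m). Let λ_vl* = 0 and λ_gr* = 2m(k−1)·p_max / (2m(k−1)·p_max + e^ε). Then (λ_gr*, λ_vl*) belongs to the feasible set F_ε and β₃(λ_gr*, λ_vl*) ≤ β₃(λ_gr, λ_vl) for every (λ_gr, λ_vl) ∈ F_ε; that is, these parameters guarantee privacy level ε and minimize the relative error of the RG scheme. (Corollary 1, second case.) -/

import Mathlib

open scoped BigOperators

noncomputable section

/-- The value alphabet `V = {±1, …, ±m} ⊆ ℤ`. -/
def Vset (m : ℕ) : Finset ℤ := (Finset.Icc (-(m : ℤ)) m).erase 0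

/-- Values as a (finite) type. -/
abbrev Vt (m : ℕ) : Type := {v : ℤ // v ∈ Vset m}

/-- Query matrices: `k × 2m` matrices whose rows are permutations of `V`,
encoded row-wise as equivalences between column indices and values. -/
abbrev Query (k m : ℕ) : Type := Fin k → (Fin (2*m) ≃ Vt m)

/-- The randomized response channel `RR_λ` on `V`: probability that input `v`
is turned into output `w`. -/
def RR (m : ℕ) (lam : ℝ) (v w : Vt m) : ℝ :=
  if w = v then 1 - lam else lam / (2*m - 1)
/-- `β₁ = 2m(k−1)(1−λ_gr)/((2m−1)λ_gr)`. -/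
def B1 (k m : ℕ) (lgr : ℝ) : ℝ := 2*m*((k : ℝ) - 1)*(1 - lgr) / ((2*m - 1)*lgr)

/-- `β₂ = 2m(1−λ_vl) − 1`. -/
def B2 (m : ℕ) (lvl : ℝ) : ℝ := 2*m*(1 - lvl) - 1

/-- The relative-error coefficient `β₃` of the RG scheme (its relative error
times `n`), with `c = E[V²]`. -/
def B3 (k m : ℕ) (c lgr lvl : ℝ) : ℝ :=
  c * ((2*m - 1) / ((1 - lgr) * B2 m lvl) - 1)
    + (4*m^2 - 1) * (m + 1) * (2*m*lvl*(1 - lgr) + lgr*(2*m - 1))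
        / (6 * (1 - lgr)^2 * (B2 m lvl)^2)

/-- The feasible set `F_ε`: pairs `(λ_gr, λ_vl)` of RG parameters whose
privacy level `max{β₁(p_max·β₂+λ_vl), 1/(β₁(p_min·β₂+λ_vl))}` equals `e^ε`. -/
def Feas (k m : ℕ) (pmax pmin ε : ℝ) : Set (ℝ × ℝ) :=
  {x | x.1 ∈ Set.Ioo (0:ℝ) 1 ∧ x.2 ∈ Set.Ico (0:ℝ) (1 - 1/(2*m)) ∧
    max (B1 k m x.1 * (pmax * B2 m x.2 + x.2))
        (1 / (B1 k m x.1 * (pmin * B2 m x.2 + x.2))) = Real.exp ε}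

/-!
Writing `u = 1 − λ_gr` and `y = (2m−1)/(u·β₂)`, the error `β₃` depends on the parameters only
through `y`: it equals `c(y−1) + (2m+1)(m+1)·y(y−1)/6`, which is nondecreasing for `y ≥ 1`.
The privacy bound `β₁(p_max·β₂ + λ_vl) ≤ e^ε` forces `y ≥ 1 + 2m(k−1)p_max/e^ε`, and the
proposed parameters attain exactly this value of `y`.  They are feasible because the first entry
of the maximum is then `e^ε` and the second is `p_max/(e^ε p_min) ≤ e^ε`; in the uniform case
`p_max = 1/(2m)` every `p_g(v)` equals `1/(2m)`, so `p_max = p_min`.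
-/

open Finset

def B3Profile (m : ℕ) (c y : ℝ) : ℝ := c * (y - 1) + (2*m + 1) * (m + 1) / 6 * (y * (y - 1))

def lgrOpt (k m : ℕ) (pmax a : ℝ) : ℝ := 2*m*((k:ℝ) - 1) * pmax / (2*m*((k:ℝ) - 1) * pmax + a)

lemma two_mul_natCast_sub_one_ne_zero (m : ℕ) : (2*m - 1 : ℝ) ≠ 0 := by
  intro h
  have : ((2*m : ℕ) : ℝ) = (1 : ℕ) := by push_cast; linarith
  have : 2*m = 1 := by exact_mod_cast this
  omega

lemma B2_pos {m : ℕ} {lvl : ℝ} (hm : 0 < m) (hlvl : lvl < 1 - 1/(2*m)) : 0 < B2 m lvl := by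
  have hm' : (0 : ℝ) < 2*m := by positivity
  have : 2*m*lvl < 2*m*(1 - 1/(2*m)) := mul_lt_mul_of_pos_left hlvl hm'
  rw [mul_sub, mul_one_div_cancel hm'.ne'] at this
  rw [B2]
  linarith

lemma B3_eq_B3Profile (k m : ℕ) (c : ℝ) {lgr lvl : ℝ} (hlgr : lgr ≠ 1) (hB2 : B2 m lvl ≠ 0) :
    B3 k m c lgr lvl = B3Profile m c ((2*m - 1) / ((1 - lgr) * B2 m lvl)) := by
  have hu : 1 - lgr ≠ 0 := sub_ne_zero.mpr hlgr.symm
  have hD := two_mul_natCast_sub_one_ne_zero m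
  rw [B3, B3Profile]
  rw [B2] at hB2 ⊢
  field_simp
  ring

lemma B3Profile_mono (m : ℕ) {c y y' : ℝ} (hc : 0 ≤ c) (hy : 1 ≤ y) (hyy' : y ≤ y') :
    B3Profile m c y ≤ B3Profile m c y' := by
  unfold B3Profile
  gcongr
  all_goals linarith

lemma B3_lgrOpt (k m : ℕ) (c : ℝ) {pmax a : ℝ} (ha : 0 < a)
    (hA : 0 < 2*m*((k:ℝ) - 1) * pmax + a) :
    B3 k m c (lgrOpt k m pmax a) 0 = B3Profile m c (1 + 2*m*((k:ℝ) - 1) * pmax / a) := by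
  have hu : 1 - lgrOpt k m pmax a = a / (2*m*((k:ℝ) - 1) * pmax + a) := by
    rw [lgrOpt]
    field_simp
    ring
  have hB2 : B2 m 0 = 2*m - 1 := by rw [B2]; ring
  have hD := two_mul_natCast_sub_one_ne_zero m
  have hlgr : lgrOpt k m pmax a < 1 := sub_pos.mp (hu ▸ div_pos ha hA)
  rw [B3_eq_B3Profile k m c hlgr.ne (by rw [hB2]; exact hD), hu, hB2]
  congr 1
  field_simp
  ring

lemma one_add_div_le_of_privacy_le {k m : ℕ} (hm : 0 < m) (hk : 1 ≤ k) {pmax a lgr lvl : ℝ}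
    (ha : 0 < a) (hlgr0 : 0 < lgr) (hlgr1 : lgr < 1) (hlvl0 : 0 ≤ lvl) (hB2 : 0 < B2 m lvl)
    (hpriv : B1 k m lgr * (pmax * B2 m lvl + lvl) ≤ a) :
    1 + 2*m*((k:ℝ) - 1) * pmax / a ≤ (2*m - 1) / ((1 - lgr) * B2 m lvl) := by
  have hm1 : (1 : ℝ) ≤ m := by exact_mod_cast hm
  have hk1 : (0 : ℝ) ≤ (k : ℝ) - 1 := by
    have : (1 : ℝ) ≤ k := by exact_mod_cast hk
    linarith
  have hu : 0 < 1 - lgr := by linarith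
  have hB2D : B2 m lvl ≤ 2*m - 1 := by rw [B2]; nlinarith
  rw [B1, div_mul_eq_mul_div, div_le_iff₀ (by nlinarith)] at hpriv
  have hlvl_term : 0 ≤ 2*m*((k:ℝ) - 1)*(1 - lgr) * lvl := by positivity
  -- drop the `λ_vl` contribution, then use `β₂ ≤ 2m − 1` on the remaining `a·u·β₂`
  have key : (2*m*((k:ℝ) - 1) * pmax + a) * ((1 - lgr) * B2 m lvl) ≤ a * (2*m - 1) := by
    nlinarith [mul_le_mul_of_nonneg_left hB2D (by positivity : 0 ≤ a * (1 - lgr))]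
  rw [le_div_iff₀ (by positivity), one_add_div ha.ne', div_mul_eq_mul_div, div_le_iff₀ ha]
  linarith

lemma B3_lgrOpt_le_of_privacy_le {k m : ℕ} (hm : 0 < m) (hk : 1 ≤ k) {c pmax a lgr lvl : ℝ}
    (hc : 0 ≤ c) (hpmax : 0 ≤ pmax) (ha : 0 < a) (hlgr0 : 0 < lgr) (hlgr1 : lgr < 1)
    (hlvl0 : 0 ≤ lvl) (hlvl1 : lvl < 1 - 1/(2*m))
    (hpriv : B1 k m lgr * (pmax * B2 m lvl + lvl) ≤ a) :
    B3 k m c (lgrOpt k m pmax a) 0 ≤ B3 k m c lgr lvl := by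
  have hB2 := B2_pos hm hlvl1
  have hA : 0 ≤ 2*m*((k:ℝ) - 1) * pmax := by
    have : (1 : ℝ) ≤ k := by exact_mod_cast hk
    exact mul_nonneg (mul_nonneg (by positivity) (by linarith)) hpmax
  rw [B3_lgrOpt k m c ha (by positivity), B3_eq_B3Profile k m c hlgr1.ne hB2.ne']
  exact B3Profile_mono m hc (le_add_of_nonneg_right (by positivity))
    (one_add_div_le_of_privacy_le hm hk ha hlgr0 hlgr1 hlvl0 hB2 hpriv)

lemma B1_lgrOpt {k m : ℕ} (hm : 0 < m) (hk : 2 ≤ k) {pmax a : ℝ} (hpmax : 0 < pmax)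
    (ha : 0 < a) : B1 k m (lgrOpt k m pmax a) = a / ((2*m - 1) * pmax) := by
  have hm' : (0 : ℝ) < m := by exact_mod_cast hm
  have hk' : (0 : ℝ) < (k : ℝ) - 1 := by
    have : (2 : ℝ) ≤ k := by exact_mod_cast hk
    linarith
  have hD := two_mul_natCast_sub_one_ne_zero m
  have hAa : 0 < 2*m*((k:ℝ) - 1) * pmax + a := by positivity
  rw [B1, lgrOpt]
  field_simp
  ring

lemma lgrOpt_mem_Feas {k m : ℕ} (hm : 0 < m) (hk : 2 ≤ k) {pmax pmin ε : ℝ} (hpmax : 0 < pmax)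
    (hratio : pmax ≤ Real.exp ε ^ 2 * pmin) :
    (lgrOpt k m pmax (Real.exp ε), 0) ∈ Feas k m pmax pmin ε := by
  have ha := Real.exp_pos ε
  have hm' : (1 : ℝ) ≤ m := by exact_mod_cast hm
  have hk' : (1 : ℝ) ≤ (k : ℝ) - 1 := by
    have : (2 : ℝ) ≤ k := by exact_mod_cast hk
    linarith
  have hA : 0 < 2*m*((k:ℝ) - 1) * pmax := by positivity
  have hD : (0 : ℝ) < 2*m - 1 := by linarith
  have hpmin : 0 < pmin := pos_of_mul_pos_right (hpmax.trans_le hratio) (by positivity)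
  refine ⟨⟨div_pos hA (by positivity), (div_lt_one (by positivity)).mpr (by linarith)⟩,
    ⟨le_rfl, ?_⟩, ?_⟩
  · rw [sub_pos, div_lt_one (by positivity)]
    linarith
  · have hB2 : B2 m 0 = 2*m - 1 := by rw [B2]; ring
    simp only [B1_lgrOpt hm hk hpmax ha, hB2, add_zero]
    rw [max_eq_left]
    · field_simp
    · rw [div_mul_eq_mul_div, one_div_div, div_le_iff₀ (by positivity)]
      field_simp
      linarith

lemma le_iSup_iSup_of_finite {α ι κ : Type*} [ConditionallyCompleteLinearOrder α] [Finite ι]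
    [Finite κ] (f : ι → κ → α) (i : ι) (j : κ) : f i j ≤ ⨆ i, ⨆ j, f i j :=
  (le_ciSup (Finite.bddAbove_range _) j).trans
    (le_ciSup (Finite.bddAbove_range fun i => ⨆ j, f i j) i)

lemma exists_eq_iInf_iInf_of_finite {α ι κ : Type*} [ConditionallyCompleteLinearOrder α]
    [Finite ι] [Finite κ] [Nonempty ι] [Nonempty κ] (f : ι → κ → α) :
    ∃ i j, f i j = ⨅ i, ⨅ j, f i j := by
  obtain ⟨i, hi⟩ := exists_eq_ciInf_of_finite (f := fun i => ⨅ j, f i j)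
  obtain ⟨j, hj⟩ := exists_eq_ciInf_of_finite (f := f i)
  exact ⟨i, j, hj.trans hi⟩

lemma eq_one_div_card_of_le_of_sum_eq_one {ι : Type*} [Fintype ι] {f : ι → ℝ}
    (hle : ∀ i, f i ≤ 1 / Fintype.card ι) (hsum : ∑ i, f i = 1) (i : ι) :
    f i = 1 / Fintype.card ι := by
  have : Nonempty ι := ⟨i⟩
  have hcard : (Fintype.card ι : ℝ) ≠ 0 := Nat.cast_ne_zero.mpr Fintype.card_ne_zero
  have hsum' : ∑ i, f i = ∑ _i : ι, 1 / (Fintype.card ι : ℝ) := by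
    rw [hsum, sum_const, card_univ, nsmul_eq_mul, mul_one_div_cancel hcard]
  exact (sum_eq_sum_iff_of_le fun i _ => hle i).1 hsum' i (mem_univ i)

lemma iInf_iInf_eq_of_iSup_iSup_eq_one_div_card {ι κ : Type*} [Finite ι] [Nonempty ι]
    [Fintype κ] [Nonempty κ] {f : ι → κ → ℝ} (hsum : ∀ i, ∑ j, f i j = 1)
    (h : ⨆ i, ⨆ j, f i j = 1 / Fintype.card κ) : ⨅ i, ⨅ j, f i j = 1 / Fintype.card κ := by
  obtain ⟨i, j, hij⟩ := exists_eq_iInf_iInf_of_finite f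
  rw [← hij]
  exact eq_one_div_card_of_le_of_sum_eq_one (fun j' => h ▸ le_iSup_iSup_of_finite f i j') (hsum i) j

lemma card_Vt {m : ℕ} : Fintype.card (Vt m) = 2*m := by
  rw [Fintype.card_coe, Vset, card_erase_of_mem (by simp), Int.card_Icc]
  omega

theorem stmt16_general (m k : ℕ) (hm : 0 < m) (hk : 2 ≤ k)
    (p : Fin k → Vt m → ℝ)
    (hpsum : ∀ g, ∑ v : Vt m, p g v = 1)
    (hp : ∀ g v, 0 < p g v ∧ p g v < 1)
    (θ : Fin k → ℝ) (hθ0 : ∀ g, 0 ≤ θ g)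
    (pmax pmin c : ℝ)
    (hpmax : pmax = ⨆ g, ⨆ v, p g v)
    (hpmin : pmin = ⨅ g, ⨅ v, p g v)
    (hc : c = ∑ g : Fin k, θ g * ∑ v : Vt m, ((v : ℤ) : ℝ)^2 * p g v)
    (ε : ℝ) (hε : 0 < ε)
    (hcase : pmax / pmin ≤ Real.exp (2*ε) ∨ pmax = 1/(2*m))
    (lvlstar lgrstar : ℝ)
    (hlvlstar : lvlstar = 0)
    (hlgrstar : lgrstar = 2*m*((k:ℝ) - 1) * pmax
        / (2*m*((k:ℝ) - 1) * pmax + Real.exp ε)) :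
    (lgrstar, lvlstar) ∈ Feas k m pmax pmin ε
    ∧ ∀ x ∈ Feas k m pmax pmin ε,
        B3 k m c lgrstar lvlstar ≤ B3 k m c x.1 x.2 := by
  have : Nonempty (Fin k) := ⟨⟨0, by omega⟩⟩
  have : Nonempty (Vt m) := ⟨⟨1, by simp only [Vset, mem_erase, mem_Icc]; omega⟩⟩
  have hle : ∀ g v, p g v ≤ pmax := hpmax ▸ le_iSup_iSup_of_finite p
  obtain ⟨g₀, v₀, hpmin_eq⟩ := exists_eq_iInf_iInf_of_finite p
  have hpmax_pos : 0 < pmax := (hp g₀ v₀).1.trans_le (hle g₀ v₀)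
  have hratio : pmax ≤ Real.exp ε ^ 2 * pmin := by
    rcases hcase with h | h
    · have hpmin_pos : 0 < pmin := hpmin ▸ hpmin_eq ▸ (hp g₀ v₀).1
      rwa [div_le_iff₀ hpmin_pos, two_mul, Real.exp_add, ← sq] at h
    · have hcard : (Fintype.card (Vt m) : ℝ) = 2*m := by rw [card_Vt]; push_cast; rfl
      have hpmin_eq_pmax : pmin = pmax := by
        rw [hpmin, iInf_iInf_eq_of_iSup_iSup_eq_one_div_card hpsum (by rw [hcard, ← hpmax, h]),
          hcard, h]
      rw [hpmin_eq_pmax]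
      exact le_mul_of_one_le_left hpmax_pos.le (one_le_pow₀ (Real.one_le_exp hε.le))
  have hc0 : 0 ≤ c := hc ▸ sum_nonneg fun g _ =>
    mul_nonneg (hθ0 g) (sum_nonneg fun v _ => mul_nonneg (sq_nonneg _) (hp g v).1.le)
  have hlgr_opt : lgrstar = lgrOpt k m pmax (Real.exp ε) := hlgrstar
  subst hlvlstar hlgr_opt
  refine ⟨lgrOpt_mem_Feas hm hk hpmax_pos hratio, ?_⟩
  rintro ⟨lgr, lvl⟩ ⟨⟨hlgr0, hlgr1⟩, ⟨hlvl0, hlvl1⟩, hmax⟩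
  exact B3_lgrOpt_le_of_privacy_le hm (by omega) hc0 hpmax_pos.le (Real.exp_pos ε) hlgr0 hlgr1
    hlvl0 hlvl1 (hmax ▸ le_max_left _ _)

/-- Corollary 1, second case: if `e^{2ε} ≥ p_max/p_min` or
`p_max = 1/(2m)`, then with `λ_vl* = 0` and
`λ_gr* = 2m(k−1)p_max/(2m(k−1)p_max + e^ε)`, the pair `(λ_gr*, λ_vl*)` is
feasible (guarantees privacy level `ε`) and minimizes the relative error
`β₃` of the RG scheme over the feasible set. -/
theorem stmt16 (m k : ℕ) (hm : 0 < m) (hk : 2 ≤ k)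
    (p : Fin k → Vt m → ℝ)
    (hpsum : ∀ g, ∑ v : Vt m, p g v = 1)
    (hp : ∀ g v, 0 < p g v ∧ p g v < 1)
    (θ : Fin k → ℝ) (hθ0 : ∀ g, 0 ≤ θ g) (hθ1 : ∑ g, θ g = 1)
    (pmax pmin c : ℝ)
    (hpmax : pmax = ⨆ g, ⨆ v, p g v)
    (hpmin : pmin = ⨅ g, ⨅ v, p g v)
    (hc : c = ∑ g : Fin k, θ g * ∑ v : Vt m, ((v : ℤ) : ℝ)^2 * p g v)
    (ε : ℝ) (hε : 0 < ε)
    (hcase : pmax / pmin ≤ Real.exp (2*ε) ∨ pmax = 1/(2*m))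
    (lvlstar lgrstar : ℝ)
    (hlvlstar : lvlstar = 0)
    (hlgrstar : lgrstar = 2*m*((k:ℝ) - 1) * pmax
        / (2*m*((k:ℝ) - 1) * pmax + Real.exp ε)) :
    (lgrstar, lvlstar) ∈ Feas k m pmax pmin ε
    ∧ ∀ x ∈ Feas k m pmax pmin ε,
        B3 k m c lgrstar lvlstar ≤ B3 k m c x.1 x.2 :=
  stmt16_general m k hm hk p hpsum hp θ hθ0 pmax pmin c hpmax hpmin hc ε hε hcase lvlstar lgrstar
    hlvlstar hlgrstar
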